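/- For arbitrary input |φ⟩ = α|0⟩+β|1⟩, the cloner output satisfies U|φ⟩|00⟩ = √(2/3) α|00⟩|1⟩ + (1/√6)|01⟩(−α|0⟩+β|1⟩) − √(2/3) β|11⟩|0⟩ + (1/√6)|10⟩(−α|0⟩+β|1⟩). Hence if both clones are measured in the computational basis, the outcomes 01 and 10 each occur with probability 1/6 (total 1/3 for differing outcomes), and in those cases applying −σ_z to the ancilla recovers |φ⟩ exactly; whereas after outcomes 00 or 11 the ancilla state is |1⟩ or |0⟩ respectively, independent of the input. -/

import Mathlib

/-! After a differing outcome 01 or 10 the unnormalised ancilla state is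
(1/√6)(−α|0⟩ + β|1⟩): its squared norm is (|α|² + |β|²)/6 = 1/6, and −σ_z flips the sign
of the |0⟩ component, giving |φ⟩/√6. After 00 or 11 only one ancilla component survives. -/

open scoped ComplexConjugate ComplexOrder
open Finset Matrix

noncomputable section

/-- Index set for three qubits: (clone 1, clone 2, ancilla). -/
abbrev I3 := Fin 2 × Fin 2 × Fin 2

/-- Image of |0⟩|00⟩ under the universal 1→2 cloner:
    √(2/3)|00⟩|1⟩ − (1/√6)(|01⟩+|10⟩)|0⟩. -/
def out0 : I3 → ℂ := fun p =>
  if p = (0, 0, 1) then ((Real.sqrt (2/3) : ℝ) : ℂ)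
  else if p = (0, 1, 0) then -(((1 / Real.sqrt 6 : ℝ)) : ℂ)
  else if p = (1, 0, 0) then -(((1 / Real.sqrt 6 : ℝ)) : ℂ)
  else 0

/-- Image of |1⟩|00⟩ under the universal 1→2 cloner:
    −√(2/3)|11⟩|0⟩ + (1/√6)(|10⟩+|01⟩)|1⟩. -/
def out1 : I3 → ℂ := fun p =>
  if p = (1, 1, 0) then -((Real.sqrt (2/3) : ℝ) : ℂ)
  else if p = (1, 0, 1) then (((1 / Real.sqrt 6 : ℝ)) : ℂ)
  else if p = (0, 1, 1) then (((1 / Real.sqrt 6 : ℝ)) : ℂ)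
  else 0

/-- Output of the cloner on input α|0⟩+β|1⟩. -/
def cloneOut (α β : ℂ) : I3 → ℂ := fun p => α * out0 p + β * out1 p

/-- Output density matrix U(|φ⟩⟨φ| ⊗ |00⟩⟨00|)U†. -/
def rhoOut (α β : ℂ) : Matrix I3 I3 ℂ :=
  Matrix.of fun p q => cloneOut α β p * conj (cloneOut α β q)

/-- Reduced state of the first clone. -/
def rhoC (α β : ℂ) : Matrix (Fin 2) (Fin 2) ℂ :=
  Matrix.of fun i j => ∑ b : Fin 2, ∑ c : Fin 2, rhoOut α β (i, b, c) (j, b, c)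

/-- Reduced state of the ancilla. -/
def rhoA (α β : ℂ) : Matrix (Fin 2) (Fin 2) ℂ :=
  Matrix.of fun i j => ∑ a : Fin 2, ∑ b : Fin 2, rhoOut α β (a, b, i) (a, b, j)

/-- Reduced state of the two clones. -/
def rhoCC (α β : ℂ) : Matrix (Fin 2 × Fin 2) (Fin 2 × Fin 2) ℂ :=
  Matrix.of fun p q => ∑ c : Fin 2, rhoOut α β (p.1, p.2, c) (q.1, q.2, c)

def σx : Matrix (Fin 2) (Fin 2) ℂ := !![0, 1; 1, 0]
def σy : Matrix (Fin 2) (Fin 2) ℂ := !![0, -Complex.I; Complex.I, 0]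
def σz : Matrix (Fin 2) (Fin 2) ℂ := !![1, 0; 0, -1]

/-- s·σ for a real 3-vector s. -/
def pauliDot (s : Fin 3 → ℝ) : Matrix (Fin 2) (Fin 2) ℂ :=
  ((s 0 : ℝ) : ℂ) • σx + ((s 1 : ℝ) : ℂ) • σy + ((s 2 : ℝ) : ℂ) • σz

/-- (1/2)(I + s·σ), the state with Bloch vector s. -/
def blochMat (s : Fin 3 → ℝ) : Matrix (Fin 2) (Fin 2) ℂ :=
  (1/2 : ℂ) • (1 + pauliDot s)

def φvec (α β : ℂ) : Fin 2 → ℂ := ![α, β]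

/-- Outer product |v⟩⟨v| on a qubit. -/
def outer (v : Fin 2 → ℂ) : Matrix (Fin 2) (Fin 2) ℂ :=
  Matrix.of fun i j => v i * conj (v j)

/-- The images U(|i⟩|00⟩) of the two input basis states. -/
def Uout : Fin 2 → I3 → ℂ := ![out0, out1]

/-- Effective operator on the input qubit corresponding to an operator F on the output:
    E i j = ⟨U(|i⟩|00⟩)| F |U(|j⟩|00⟩)⟩ = (⟨00|_{ba} U† F U |00⟩_{ba}) i j. -/
def effOf (F : Matrix I3 I3 ℂ) : Matrix (Fin 2) (Fin 2) ℂ :=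
  Matrix.of fun i j => ∑ p : I3, ∑ q : I3, conj (Uout i p) * F p q * Uout j q

/-- F ⊗ I ⊗ I: a measurement on the first clone only. -/
def extC (F : Matrix (Fin 2) (Fin 2) ℂ) : Matrix I3 I3 ℂ :=
  Matrix.of fun p q => F p.1 q.1 * (if p.2 = q.2 then 1 else 0)

/-- I ⊗ I ⊗ F: a measurement on the ancilla only. -/
def extA (F : Matrix (Fin 2) (Fin 2) ℂ) : Matrix I3 I3 ℂ :=
  Matrix.of fun p q => (if (p.1, p.2.1) = (q.1, q.2.1) then 1 else 0) * F p.2.2 q.2.2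

/-- F ⊗ I_ancilla: a measurement on the two clones. -/
def extCC (F : Matrix (Fin 2 × Fin 2) (Fin 2 × Fin 2) ℂ) : Matrix I3 I3 ℂ :=
  Matrix.of fun p q => F (p.1, p.2.1) (q.1, q.2.1) * (if p.2.2 = q.2.2 then 1 else 0)

/-- Bell basis on two qubits, in the order φ⁺, ψ⁺, φ⁻, ψ⁻. -/
def bell : Fin 4 → (Fin 2 × Fin 2) → ℂ :=
  ![fun p => if p = (0,0) then ((1 / Real.sqrt 2 : ℝ) : ℂ)
             else if p = (1,1) then ((1 / Real.sqrt 2 : ℝ) : ℂ) else 0,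
    fun p => if p = (0,1) then ((1 / Real.sqrt 2 : ℝ) : ℂ)
             else if p = (1,0) then ((1 / Real.sqrt 2 : ℝ) : ℂ) else 0,
    fun p => if p = (0,0) then ((1 / Real.sqrt 2 : ℝ) : ℂ)
             else if p = (1,1) then -((1 / Real.sqrt 2 : ℝ) : ℂ) else 0,
    fun p => if p = (0,1) then ((1 / Real.sqrt 2 : ℝ) : ℂ)
             else if p = (1,0) then -((1 / Real.sqrt 2 : ℝ) : ℂ) else 0]

/-- Kronecker product of two single-qubit matrices. -/
def kron2 (A B : Matrix (Fin 2) (Fin 2) ℂ) : Matrix (Fin 2 × Fin 2) (Fin 2 × Fin 2) ℂ :=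
  Matrix.of fun p q => A p.1 q.1 * B p.2 q.2

/-- Projector onto the symmetric subspace of two qubits: I − |ψ⁻⟩⟨ψ⁻|. -/
def symProj : Matrix (Fin 2 × Fin 2) (Fin 2 × Fin 2) ℂ :=
  1 - Matrix.of fun p q => bell 3 p * conj (bell 3 q)

/-- Projector onto the antisymmetric subspace: |ψ⁻⟩⟨ψ⁻|. -/
def antiProj : Matrix (Fin 2 × Fin 2) (Fin 2 × Fin 2) ℂ :=
  Matrix.of fun p q => bell 3 p * conj (bell 3 q)

/-- Computational basis vector |abc⟩ of three qubits. -/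
def e3 (a b c : Fin 2) : I3 → ℂ := fun p => if p = (a, b, c) then 1 else 0

/-- ∑ₚ conj(v p) w p, the inner product on three qubits. -/
def inner3 (v w : I3 → ℂ) : ℂ := ∑ p : I3, conj (v p) * w p

/-- Unnormalized conditional ancilla state after computational outcomes (a,b) on the clones. -/
def condClones (α β : ℂ) (a b : Fin 2) : Fin 2 → ℂ := fun c => cloneOut α β (a, b, c)

lemma normSq_ofReal_one_div_sqrt_six : Complex.normSq ((1 / Real.sqrt 6 : ℝ) : ℂ) = 1 / 6 := by
  rw [Complex.normSq_ofReal, div_mul_div_comm, Real.mul_self_sqrt (by norm_num)]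
  norm_num

lemma sum_normSq_smul {ι : Type*} [Fintype ι] (z : ℂ) (v : ι → ℂ) :
    ∑ i, Complex.normSq ((z • v) i) = Complex.normSq z * ∑ i, Complex.normSq (v i) := by
  simp only [Pi.smul_apply, smul_eq_mul, Complex.normSq_mul, Finset.mul_sum]

lemma neg_σz_mulVec (x y : ℂ) : (-σz) *ᵥ ![x, y] = ![-x, y] := by
  ext c
  fin_cases c <;> simp [σz, mulVec, dotProduct, Fin.sum_univ_two]

lemma cloneOut_expansion (α β : ℂ) (p : I3) :
    cloneOut α β p =
      ((Real.sqrt (2/3) : ℝ) : ℂ) * α * e3 0 0 1 p +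
      ((1 / Real.sqrt 6 : ℝ) : ℂ) * (-α * e3 0 1 0 p + β * e3 0 1 1 p) -
      ((Real.sqrt (2/3) : ℝ) : ℂ) * β * e3 1 1 0 p +
      ((1 / Real.sqrt 6 : ℝ) : ℂ) * (-α * e3 1 0 0 p + β * e3 1 0 1 p) := by
  obtain ⟨a, b, c⟩ := p
  fin_cases a <;> fin_cases b <;> fin_cases c <;>
    simp [cloneOut, out0, out1, e3, Prod.ext_iff] <;> ring

section condClones

variable (α β : ℂ)

lemma condClones_zero_zero :
    condClones α β 0 0 = (((Real.sqrt (2/3) : ℝ) : ℂ) * α) • ![0, 1] := by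
  ext c
  fin_cases c <;> simp [condClones, cloneOut, out0, out1, Prod.ext_iff, mul_comm]

lemma condClones_one_one :
    condClones α β 1 1 = (-((Real.sqrt (2/3) : ℝ) : ℂ) * β) • ![1, 0] := by
  ext c
  fin_cases c <;> simp [condClones, cloneOut, out0, out1, Prod.ext_iff, mul_comm]

lemma condClones_zero_one :
    condClones α β 0 1 = ((1 / Real.sqrt 6 : ℝ) : ℂ) • ![-α, β] := by
  ext c
  fin_cases c <;> simp [condClones, cloneOut, out0, out1, Prod.ext_iff] <;> ring

lemma condClones_one_zero :
    condClones α β 1 0 = ((1 / Real.sqrt 6 : ℝ) : ℂ) • ![-α, β] := by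
  ext c
  fin_cases c <;> simp [condClones, cloneOut, out0, out1, Prod.ext_iff] <;> ring

end condClones

lemma sum_normSq_inv_sqrt_six_smul {α β : ℂ}
    (hnorm : Complex.normSq α + Complex.normSq β = 1) :
    ∑ c : Fin 2, Complex.normSq ((((1 / Real.sqrt 6 : ℝ) : ℂ) • ![-α, β]) c) = 1 / 6 := by
  rw [sum_normSq_smul, normSq_ofReal_one_div_sqrt_six, Fin.sum_univ_two]
  simp [hnorm]

lemma neg_σz_mulVec_inv_sqrt_six_smul (α β : ℂ) :
    (-σz) *ᵥ (((1 / Real.sqrt 6 : ℝ) : ℂ) • ![-α, β]) =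
      ((1 / Real.sqrt 6 : ℝ) : ℂ) • φvec α β := by
  rw [mulVec_smul, neg_σz_mulVec, neg_neg, φvec]

/-- measuring both clones in the computational basis, outcomes 01 and 10 each
occur with probability 1/6 and −σ_z then recovers |φ⟩ on the ancilla exactly, whereas
after outcomes 00 and 11 the ancilla is |1⟩ resp. |0⟩, independent of the input. -/
theorem computational_measurement_clones (α β : ℂ)
    (hnorm : Complex.normSq α + Complex.normSq β = 1) :
    (∀ p : I3, cloneOut α β p =
      ((Real.sqrt (2/3) : ℝ) : ℂ) * α * e3 0 0 1 p +
      ((1 / Real.sqrt 6 : ℝ) : ℂ) * (-α * e3 0 1 0 p + β * e3 0 1 1 p) -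
      ((Real.sqrt (2/3) : ℝ) : ℂ) * β * e3 1 1 0 p +
      ((1 / Real.sqrt 6 : ℝ) : ℂ) * (-α * e3 1 0 0 p + β * e3 1 0 1 p)) ∧
    (∑ c : Fin 2, Complex.normSq (condClones α β 0 1 c) = 1/6) ∧
    (∑ c : Fin 2, Complex.normSq (condClones α β 1 0 c) = 1/6) ∧
    (-σz).mulVec (condClones α β 0 1) = ((1 / Real.sqrt 6 : ℝ) : ℂ) • φvec α β ∧
    (-σz).mulVec (condClones α β 1 0) = ((1 / Real.sqrt 6 : ℝ) : ℂ) • φvec α β ∧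
    condClones α β 0 0 = (((Real.sqrt (2/3) : ℝ) : ℂ) * α) • ![0, 1] ∧
    condClones α β 1 1 = (-((Real.sqrt (2/3) : ℝ) : ℂ) * β) • ![1, 0] := by
  rw [condClones_zero_one, condClones_one_zero]
  exact ⟨cloneOut_expansion α β, sum_normSq_inv_sqrt_six_smul hnorm,
    sum_normSq_inv_sqrt_six_smul hnorm, neg_σz_mulVec_inv_sqrt_six_smul α β,
    neg_σz_mulVec_inv_sqrt_six_smul α β, condClones_zero_zero α β, condClones_one_one α β⟩
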